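/- arXiv:2008.09997 — 4 statements merged into one kernel-verified Lean document; each statement's English description precedes it below -/
import Mathlib

section
/- Let X be a simplicial complex on n vertices that is not the complete (n−2)-dimensional skeleton (i.e., X is not the family of all subsets of V of size at most n−1). If X is not the complete complex, then X is (n−2)-representable. -/
/-!
Choose a vertex `x₀` whose opposite facet `V ∖ {x₀}` is not in `X`; it exists because `X` is
neither the `(n-2)`-skeleton nor the full simplex. Send a face `σ` to the point `a_σ • 1_σ` of
`ℝ^V`, where `a_σ = 1` if `x₀ ∈ σ` and `a_σ = n` otherwise, and let `C_v` be the convex hull of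
the points of the faces through `v`, projected to `ℝ^(n-2)` along the plane of functions that are
constant on `V ∖ {x₀}`.

On the hull for `v` the `v`-coordinate is the largest one. If `g` in the hull for `u` and `g'` in
the hull for `v` have the same projection, then `g - g'` is constant off `x₀`, so for
`u, v ≠ x₀` the `u`-coordinate of `g'` is maximal too, which puts `u` into every face carrying
`g'`. Hence a common point of the `C_v`, `v ∈ σ`, lies over faces containing `σ ∖ {x₀}`, and it
remains to find one that also contains `x₀` when `x₀ ∈ σ`. If all faces carrying `g'` avoid
`x₀`, they are proper subsets of `V ∖ {x₀}`, so the coordinates of `g'` sum to at most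
`n (n - 2)`. But `g'` differs by a constant off `x₀` from a point of the hull for `x₀`, whose
coordinates lie in `[0, 1]`, while its `v`-coordinate is `n`; so each of its `n - 1` coordinates
off `x₀` is at least `n - 1`, and `(n - 1)² > n (n - 2)`.
-/

/-- A simplicial complex: a family of finite subsets closed under subsets. -/
def IsSimplicialComplex {α : Type*} (X : Set (Finset α)) : Prop :=
  ∀ σ ∈ X, ∀ τ, τ ⊆ σ → τ ∈ X

/-- `X` is d-representable: it is the nerve of a family of compact convex sets in ℝ^d. -/
def IsRepresentable {α : Type*} (d : ℕ) (X : Set (Finset α)) : Prop :=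
  ∃ C : α → Set (EuclideanSpace ℝ (Fin d)),
    (∀ v, IsCompact (C v) ∧ Convex ℝ (C v)) ∧
      ∀ σ : Finset α, σ ∈ X ↔ (⋂ v ∈ σ, C v).Nonempty

open Finset

section SupportedSimplex

variable {ι : Type*} [Fintype ι]

def supportedSimplex (F : Set ι) : Set (ι → ℝ) :=
  stdSimplex ℝ ι ∩ Fᶜ.pi fun _ => {0}

theorem mem_supportedSimplex {F : Set ι} {lam : ι → ℝ} :
    lam ∈ supportedSimplex F ↔ lam ∈ stdSimplex ℝ ι ∧ ∀ i, lam i ≠ 0 → i ∈ F := by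
  simp only [supportedSimplex, Set.mem_inter_iff, Set.mem_pi, Set.mem_compl_iff,
    Set.mem_singleton_iff]
  exact and_congr_right fun _ => forall_congr' fun i => not_imp_comm

theorem isCompact_supportedSimplex (F : Set ι) : IsCompact (supportedSimplex F) :=
  (isCompact_stdSimplex ℝ ι).inter_right <| isClosed_set_pi fun _ _ => isClosed_singleton

theorem convex_supportedSimplex (F : Set ι) : Convex ℝ (supportedSimplex F) :=
  (convex_stdSimplex ℝ ι).inter <| convex_pi fun _ _ => convex_singleton 0

theorem single_mem_supportedSimplex [DecidableEq ι] {F : Set ι} {i : ι} (hi : i ∈ F) :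
    Pi.single i 1 ∈ supportedSimplex F := by
  refine mem_supportedSimplex.2 ⟨single_mem_stdSimplex ℝ i, fun j hj => ?_⟩
  obtain rfl : j = i := by by_contra h; exact hj (Pi.single_eq_of_ne h 1)
  exact hi

theorem exists_ne_zero_of_mem_stdSimplex {lam : ι → ℝ} (h : lam ∈ stdSimplex ℝ ι) :
    ∃ i, lam i ≠ 0 := by
  obtain ⟨i, -, hi⟩ := exists_ne_zero_of_sum_ne_zero (h.2 ▸ one_ne_zero : ∑ i, lam i ≠ 0)
  exact ⟨i, hi⟩

end SupportedSimplex

namespace NerveRealization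

variable {α : Type*} [Fintype α] [DecidableEq α]

theorem exists_linearMap_euclidean_ker_const (x₀ : α) :
    ∃ π : (α → ℝ) →ₗ[ℝ] EuclideanSpace ℝ (Fin (Fintype.card α - 2)),
      ∀ g, π g = 0 → ∀ w ≠ x₀, ∀ w' ≠ x₀, g w = g w' := by
  by_cases hα : ∃ w₁, w₁ ≠ x₀
  swap
  · push Not at hα
    exact ⟨0, fun g _ w hw => absurd (hα w) hw⟩
  obtain ⟨w₁, hw₁⟩ := hα
  set s := (univ.erase x₀).erase w₁
  have hs : #s = Fintype.card α - 2 := by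
    rw [card_erase_of_mem (mem_erase.2 ⟨hw₁, mem_univ _⟩), card_erase_of_mem (mem_univ _),
      card_univ]
    omega
  let e := (s.equivFinOfCardEq hs).symm
  let δ : α → (α → ℝ) →ₗ[ℝ] ℝ := LinearMap.proj
  refine ⟨(EuclideanSpace.equiv _ ℝ).symm.toLinearMap ∘ₗ LinearMap.pi fun i => δ (e i) - δ w₁,
    fun g hg => ?_⟩
  have hconst : ∀ w ≠ x₀, g w = g w₁ := by
    intro w hw
    by_cases hww : w = w₁
    · rw [hww]
    have hw' : w ∈ s := mem_erase.2 ⟨hww, mem_erase.2 ⟨hw, mem_univ _⟩⟩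
    simpa [δ, e, sub_eq_zero] using congr($hg (s.equivFinOfCardEq hs ⟨w, hw'⟩))
  intro w hw w' hw'
  rw [hconst w hw, hconst w' hw']

variable (x₀ : α)

noncomputable def faceWeight (σ : Finset α) : ℝ :=
  if x₀ ∈ σ then 1 else Fintype.card α

noncomputable def facePoint (σ : Finset α) : α → ℝ :=
  fun w => if w ∈ σ then faceWeight x₀ σ else 0

noncomputable def load : (Finset α → ℝ) →ₗ[ℝ] α → ℝ :=
  Fintype.linearCombination ℝ (facePoint x₀)

variable {x₀}

theorem faceWeight_pos (σ : Finset α) : 0 < faceWeight x₀ σ := by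
  unfold faceWeight
  split_ifs
  · exact one_pos
  · exact_mod_cast Fintype.card_pos_iff.2 ⟨x₀⟩

theorem load_apply (lam : Finset α → ℝ) (w : α) :
    load x₀ lam w = ∑ σ, lam σ * facePoint x₀ σ w := by
  simp [load, Fintype.linearCombination_apply, Finset.sum_apply]

theorem sum_facePoint (σ : Finset α) : ∑ w, facePoint x₀ σ w = faceWeight x₀ σ * #σ := by
  simp only [facePoint]
  rw [sum_ite_mem, univ_inter, sum_const, nsmul_eq_mul, mul_comm]

theorem sum_load_apply (lam : Finset α → ℝ) :
    ∑ w, load x₀ lam w = ∑ σ, lam σ * (faceWeight x₀ σ * #σ) := by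
  simp only [load_apply]
  rw [sum_comm]
  refine sum_congr rfl fun σ _ => ?_
  rw [← mul_sum, sum_facePoint]

theorem load_apply_of_forall_mem {lam : Finset α → ℝ} {w : α} (hw : ∀ σ, lam σ ≠ 0 → w ∈ σ) :
    load x₀ lam w = ∑ σ, lam σ * faceWeight x₀ σ := by
  rw [load_apply]
  refine sum_congr rfl fun σ _ => ?_
  by_cases h : lam σ = 0
  · simp [h]
  · simp [facePoint, hw σ h]

theorem load_apply_of_forall_not_mem {lam : Finset α → ℝ} {w : α} (hw : ∀ σ, lam σ ≠ 0 → w ∉ σ) :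
    load x₀ lam w = 0 := by
  rw [load_apply]
  refine sum_eq_zero fun σ _ => ?_
  by_cases h : lam σ = 0
  · simp [h]
  · simp [facePoint, hw σ h]

theorem facePoint_nonneg (σ : Finset α) (w : α) : 0 ≤ facePoint x₀ σ w := by
  unfold facePoint
  split_ifs
  exacts [(faceWeight_pos σ).le, le_rfl]

theorem load_nonneg {lam : Finset α → ℝ} (hlam : ∀ σ, 0 ≤ lam σ) (w : α) : 0 ≤ load x₀ lam w := by
  rw [load_apply]
  exact sum_nonneg fun σ _ => mul_nonneg (hlam σ) (facePoint_nonneg σ w)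

theorem facePoint_le_of_mem {σ : Finset α} {v : α} (hv : v ∈ σ) (w : α) :
    facePoint x₀ σ w ≤ facePoint x₀ σ v := by
  simp only [facePoint, hv, if_true]
  split_ifs
  exacts [le_rfl, (faceWeight_pos σ).le]

theorem facePoint_eq_iff_mem {σ : Finset α} {v : α} (hv : v ∈ σ) {w : α} :
    facePoint x₀ σ w = facePoint x₀ σ v ↔ w ∈ σ := by
  simp only [facePoint, hv, if_true]
  split_ifs with hw
  · exact iff_of_true rfl hw
  · exact iff_of_false (faceWeight_pos σ).ne hw

theorem mul_facePoint_le {lam : Finset α → ℝ} {σ : Finset α} (hlam : 0 ≤ lam σ) {v : α}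
    (hv : lam σ ≠ 0 → v ∈ σ) (w : α) :
    lam σ * facePoint x₀ σ w ≤ lam σ * facePoint x₀ σ v := by
  by_cases h : lam σ = 0
  · simp [h]
  · exact mul_le_mul_of_nonneg_left (facePoint_le_of_mem (hv h) w) hlam

theorem load_apply_le_load_apply {lam : Finset α → ℝ} (hlam : ∀ σ, 0 ≤ lam σ) {v : α}
    (hv : ∀ σ, lam σ ≠ 0 → v ∈ σ) (w : α) : load x₀ lam w ≤ load x₀ lam v := by
  rw [load_apply, load_apply]
  exact sum_le_sum fun σ _ => mul_facePoint_le (hlam σ) (hv σ) w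

theorem mem_of_load_apply_eq {lam : Finset α → ℝ} (hlam : ∀ σ, 0 ≤ lam σ) {v : α}
    (hv : ∀ σ, lam σ ≠ 0 → v ∈ σ) {w : α} (hw : load x₀ lam w = load x₀ lam v) (σ : Finset α)
    (hσ : lam σ ≠ 0) : w ∈ σ := by
  rw [load_apply, load_apply,
    sum_eq_sum_iff_of_le fun σ _ => mul_facePoint_le (hlam σ) (hv σ) w] at hw
  exact (facePoint_eq_iff_mem (hv σ hσ)).1 (mul_left_cancel₀ hσ (hw σ (mem_univ σ)))

theorem mem_of_load_sub_eq {lam mu : Finset α → ℝ} {u v : α}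
    (hlam : ∀ σ, 0 ≤ lam σ) (hlamv : ∀ σ, lam σ ≠ 0 → v ∈ σ)
    (hmu : ∀ σ, 0 ≤ mu σ) (hmuu : ∀ σ, mu σ ≠ 0 → u ∈ σ)
    (h : load x₀ lam u - load x₀ mu u = load x₀ lam v - load x₀ mu v) :
    ∀ σ, lam σ ≠ 0 → u ∈ σ := by
  have h₁ := load_apply_le_load_apply (x₀ := x₀) hlam hlamv u
  have h₂ := load_apply_le_load_apply (x₀ := x₀) hmu hmuu v
  exact mem_of_load_apply_eq hlam hlamv (by linarith)

theorem sum_mul_faceWeight_eq {lam : Finset α → ℝ} (hlam : ∑ σ, lam σ = 1) {c : ℝ}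
    (hc : ∀ σ, lam σ ≠ 0 → faceWeight x₀ σ = c) : ∑ σ, lam σ * faceWeight x₀ σ = c := by
  calc ∑ σ, lam σ * faceWeight x₀ σ = ∑ σ, lam σ * c := by
        refine sum_congr rfl fun σ _ => ?_
        by_cases h : lam σ = 0
        · simp [h]
        · rw [hc σ h]
    _ = c := by rw [← sum_mul, hlam, one_mul]

theorem exists_load_sub_ne {lam mu : Finset α → ℝ} {u : α}
    (hlam : lam ∈ stdSimplex ℝ (Finset α))
    (hlam_supp : ∀ σ, lam σ ≠ 0 → u ∈ σ ∧ σ ⊂ univ.erase x₀)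
    (hmu : mu ∈ stdSimplex ℝ (Finset α)) (hmu_supp : ∀ σ, mu σ ≠ 0 → x₀ ∈ σ) :
    ∃ w ≠ x₀, load x₀ lam w - load x₀ mu w ≠ load x₀ lam u - load x₀ mu u := by
  have hx₀ : ∀ σ, lam σ ≠ 0 → x₀ ∉ σ := fun σ hσ hx =>
    notMem_erase x₀ univ ((hlam_supp σ hσ).2.subset hx)
  have hcard : ∀ σ, lam σ ≠ 0 → #σ + 2 ≤ Fintype.card α := fun σ hσ => by
    have := card_lt_card (hlam_supp σ hσ).2
    rw [card_erase_of_mem (mem_univ x₀), card_univ] at this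
    omega
  set n : ℝ := (Fintype.card α : ℝ)
  have hweight : ∀ σ, lam σ ≠ 0 → faceWeight x₀ σ = n := fun σ hσ =>
    if_neg (hx₀ σ hσ)
  have hlam_u : load x₀ lam u = n := by
    rw [load_apply_of_forall_mem fun σ hσ => (hlam_supp σ hσ).1]
    exact sum_mul_faceWeight_eq hlam.2 hweight
  have hlam_x₀ : load x₀ lam x₀ = 0 :=
    load_apply_of_forall_not_mem hx₀
  have hmu_u : load x₀ mu u ≤ 1 := by
    refine (load_apply_le_load_apply hmu.1 hmu_supp u).trans_eq ?_
    rw [load_apply_of_forall_mem hmu_supp]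
    exact sum_mul_faceWeight_eq hmu.2 fun σ hσ => if_pos (hmu_supp σ hσ)
  have hupper : ∑ w, load x₀ lam w ≤ n * (n - 2) := by
    rw [sum_load_apply]
    refine (sum_le_sum fun σ _ => ?_).trans_eq (by rw [← sum_mul, hlam.2, one_mul])
    by_cases h : lam σ = 0
    · simp [h]
    refine mul_le_mul_of_nonneg_left ?_ (hlam.1 σ)
    rw [hweight σ h]
    have : ((#σ + 2 : ℕ) : ℝ) ≤ n := Nat.cast_le.2 (hcard σ h)
    push_cast at this
    exact mul_le_mul_of_nonneg_left (by linarith) (Nat.cast_nonneg _)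
  by_contra! hconst
  have hlower : (n - 1) * (n - 1) ≤ ∑ w, load x₀ lam w := by
    rw [← sum_erase univ hlam_x₀]
    refine le_of_eq_of_le ?_ (card_nsmul_le_sum _ _ (n - 1) fun w hw => ?_)
    · rw [nsmul_eq_mul, cast_card_erase_of_mem (mem_univ _), card_univ]
    · have := hconst w (ne_of_mem_erase hw)
      linarith [load_nonneg (x₀ := x₀) hmu.1 w]
  nlinarith

section Nerve

variable {E : Type*} [AddCommGroup E] [Module ℝ E] {X : Set (Finset α)} {x₀ : α}
  {π : (α → ℝ) →ₗ[ℝ] E}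

theorem load_sub_eq_of_map_eq (hπ : ∀ g, π g = 0 → ∀ w ≠ x₀, ∀ w' ≠ x₀, g w = g w')
    {lam mu : Finset α → ℝ} (h : π (load x₀ lam) = π (load x₀ mu)) {w w' : α} (hw : w ≠ x₀)
    (hw' : w' ≠ x₀) : load x₀ lam w - load x₀ mu w = load x₀ lam w' - load x₀ mu w' :=
  hπ (load x₀ lam - load x₀ mu) (by rw [map_sub, h, sub_self]) w hw w' hw'

theorem exists_mem_of_map_load_eq (hx₀ : univ.erase x₀ ∉ X)
    (hπ : ∀ g, π g = 0 → ∀ w ≠ x₀, ∀ w' ≠ x₀, g w = g w') {u : α} (hu : u ≠ x₀)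
    {lam mu : Finset α → ℝ} (hlam : lam ∈ stdSimplex ℝ (Finset α))
    (hlam_supp : ∀ ρ, lam ρ ≠ 0 → ρ ∈ X ∧ u ∈ ρ) (hmu : mu ∈ stdSimplex ℝ (Finset α))
    (hmu_supp : ∀ ρ, mu ρ ≠ 0 → x₀ ∈ ρ) (h : π (load x₀ lam) = π (load x₀ mu)) :
    ∃ ρ, lam ρ ≠ 0 ∧ x₀ ∈ ρ := by
  by_contra! hnot
  have hsub : ∀ ρ, lam ρ ≠ 0 → u ∈ ρ ∧ ρ ⊂ univ.erase x₀ := fun ρ hρ =>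
    ⟨(hlam_supp ρ hρ).2, (subset_erase.2 ⟨subset_univ ρ, hnot ρ hρ⟩).ssubset_of_ne
      fun h => hx₀ (h ▸ (hlam_supp ρ hρ).1)⟩
  obtain ⟨w, hw, hne⟩ := exists_load_sub_ne hlam hsub hmu hmu_supp
  exact hne (load_sub_eq_of_map_eq hπ h hw hu)

theorem mem_iff_nonempty_iInter (hX : IsSimplicialComplex X) (hempty : ∅ ∈ X)
    (hx₀ : univ.erase x₀ ∉ X) (hπ : ∀ g, π g = 0 → ∀ w ≠ x₀, ∀ w' ≠ x₀, g w = g w')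
    (σ : Finset α) :
    σ ∈ X ↔ (⋂ v ∈ σ, (π ∘ₗ load x₀) '' supportedSimplex {ρ ∈ X | v ∈ ρ}).Nonempty := by
  constructor
  · intro hσ
    exact ⟨π (load x₀ (Pi.single σ 1)), Set.mem_iInter₂.2 fun v hv =>
      ⟨_, single_mem_supportedSimplex ⟨hσ, hv⟩, rfl⟩⟩
  rintro ⟨z, hz⟩
  have hpre : ∀ v ∈ σ, ∃ lam, (lam ∈ stdSimplex ℝ (Finset α) ∧
      ∀ ρ, lam ρ ≠ 0 → ρ ∈ X ∧ v ∈ ρ) ∧ π (load x₀ lam) = z := by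
    intro v hv
    obtain ⟨lam, hlam, rfl⟩ := Set.mem_iInter₂.1 hz v hv
    exact ⟨lam, mem_supportedSimplex.1 hlam, rfl⟩
  suffices ∃ ρ ∈ X, σ ⊆ ρ by
    obtain ⟨ρ, hρ, hσρ⟩ := this
    exact hX ρ hρ σ hσρ
  rcases (σ.erase x₀).eq_empty_or_nonempty with hσ | ⟨u, hu⟩
  · rcases (erase_eq_empty_iff σ x₀).1 hσ with rfl | rfl
    · exact ⟨∅, hempty, subset_rfl⟩
    obtain ⟨lam, ⟨hlam, hsupp⟩, -⟩ := hpre x₀ (mem_singleton_self x₀)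
    obtain ⟨ρ, hρ⟩ := exists_ne_zero_of_mem_stdSimplex hlam
    exact ⟨ρ, (hsupp ρ hρ).1, singleton_subset_iff.2 (hsupp ρ hρ).2⟩
  obtain ⟨hux₀, huσ⟩ := mem_erase.1 hu
  obtain ⟨lam, ⟨hlam, hsupp⟩, rfl⟩ := hpre u huσ
  obtain ⟨ρ, hρ, hx₀ρ⟩ : ∃ ρ, lam ρ ≠ 0 ∧ (x₀ ∈ σ → x₀ ∈ ρ) := by
    by_cases hx₀σ : x₀ ∈ σ
    · obtain ⟨mu, ⟨hmu, hmu_supp⟩, hmuz⟩ := hpre x₀ hx₀σ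
      obtain ⟨ρ, hρ, hx₀ρ⟩ := exists_mem_of_map_load_eq hx₀ hπ hux₀ hlam hsupp hmu
        (fun ρ hρ => (hmu_supp ρ hρ).2) hmuz.symm
      exact ⟨ρ, hρ, fun _ => hx₀ρ⟩
    · obtain ⟨ρ, hρ⟩ := exists_ne_zero_of_mem_stdSimplex hlam
      exact ⟨ρ, hρ, fun h => absurd h hx₀σ⟩
  refine ⟨ρ, (hsupp ρ hρ).1, fun y hy => ?_⟩
  by_cases hyx₀ : y = x₀
  · exact hyx₀ ▸ hx₀ρ (hyx₀ ▸ hy)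
  obtain ⟨mu, ⟨hmu, hmu_supp⟩, hmuz⟩ := hpre y hy
  exact mem_of_load_sub_eq hlam.1 (fun ρ hρ => (hsupp ρ hρ).2) hmu.1
    (fun ρ hρ => (hmu_supp ρ hρ).2) (load_sub_eq_of_map_eq hπ hmuz.symm hyx₀ hux₀) ρ hρ

end Nerve

theorem exists_erase_not_mem {X : Set (Finset α)} (hX : IsSimplicialComplex X) (hempty : ∅ ∈ X)
    (hskel : X ≠ {σ | #σ ≤ Fintype.card α - 1}) (hcomplete : X ≠ Set.univ) :
    ∃ x₀, univ.erase x₀ ∉ X := by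
  by_contra! h
  refine hskel (Set.ext fun σ => ⟨fun hσ => ?_, fun hσ => ?_⟩)
  · by_contra hcard
    have hσu : σ = univ := eq_univ_of_card σ <| by
      have := card_le_univ σ
      simp only [Set.mem_ofPred_eq] at hcard
      omega
    exact hcomplete (Set.eq_univ_of_forall fun τ => hX σ hσ τ (hσu ▸ subset_univ τ))
  · by_cases hfull : ∀ x, x ∈ σ
    · obtain rfl : σ = ∅ := by
        simp only [Set.mem_ofPred_eq, eq_univ_iff_forall.2 hfull, card_univ] at hσ
        rw [← card_eq_zero, eq_univ_iff_forall.2 hfull, card_univ]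
        omega
      exact hempty
    push Not at hfull
    obtain ⟨x, hx⟩ := hfull
    exact hX _ (h x) σ (subset_erase.2 ⟨subset_univ σ, hx⟩)

end NerveRealization

open NerveRealization

theorem representable_sub_two_general {α : Type*} [Fintype α] [DecidableEq α]
    (X : Set (Finset α)) (hX : IsSimplicialComplex X)
    (hempty : ∅ ∈ X)
    (hskel : X ≠ {σ : Finset α | σ.card ≤ Fintype.card α - 1})
    (hcomplete : X ≠ Set.univ) :
    IsRepresentable (Fintype.card α - 2) X := by
  obtain ⟨x₀, hx₀⟩ := exists_erase_not_mem hX hempty hskel hcomplete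
  obtain ⟨π, hπ⟩ := exists_linearMap_euclidean_ker_const x₀
  refine ⟨fun v => (π ∘ₗ load x₀) '' supportedSimplex {ρ ∈ X | v ∈ ρ}, fun v => ⟨?_, ?_⟩,
    mem_iff_nonempty_iInter hX hempty hx₀ hπ⟩
  · exact (isCompact_supportedSimplex _).image (LinearMap.continuous_of_finiteDimensional _)
  · exact (convex_supportedSimplex _).linear_image _

/-- A simplicial complex on n vertices that is neither the complete
(n−2)-dimensional skeleton nor the complete complex is (n−2)-representable. -/
theorem representable_sub_two {α : Type*} [Fintype α] [DecidableEq α]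
    (X : Set (Finset α)) (hX : IsSimplicialComplex X)
    (hempty : ∅ ∈ X) (hsing : ∀ v : α, {v} ∈ X)
    (hskel : X ≠ {σ : Finset α | σ.card ≤ Fintype.card α - 1})
    (hcomplete : X ≠ Set.univ) :
    IsRepresentable (Fintype.card α - 2) X :=
  representable_sub_two_general X hX hempty hskel hcomplete
end

section
/- Let X be a simplicial complex on vertex set V, and let V₁, ..., V_k ⊆ V satisfy V_i ∉ X for all i and, for every missing face τ of X, there exists i with |τ \ V_i| ≤ 1. Then X can be written as an intersection X = X₁ ∩ ... ∩ X_k where each X_i is (|V_i| − 1)-representable; in particular, X is (Σ_i (|V_i| − 1))-representable. -/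
/-- `τ` is a missing face of `X`. -/
def IsMissingFace {α : Type*} (X : Set (Finset α)) (τ : Finset α) : Prop :=
  τ ∉ X ∧ ∀ σ, σ ⊂ τ → σ ∈ X

/-!
For a finite set `W ∉ X`, let `Z_W` be the complex whose missing faces are the missing faces `τ`
of `X` with `|τ \ W| ≤ 1`. The hypothesis on missing faces says exactly that `X = ⋂ i, Z_{V i}`,
and a nerve of products of convex sets is the intersection of the nerves, so it suffices to
represent each `Z_W` in dimension `|W| - 1`.

Fix a simplex with vertex set `W` in `ℝ^{|W|-1}`. A face `σ` of `Z_W` never contains `W`, so we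
may send it to the barycentre `y_σ` of the face of the simplex spanned by `W \ σ`; let `C_u` be
the convex hull of the `y_σ` over the faces `σ ∋ u`. If `σ ∈ Z_W`, then `y_σ` lies in every
`C_u` with `u ∈ σ`. Conversely, let `x` lie in all of them while `σ` contains a missing face `τ`
with `|τ \ W| ≤ 1`, and put `ρ = τ ∩ W`. Then `x` has zero barycentric coordinates on `ρ`; but
for a vertex `u ∈ τ` with `τ ⊆ insert u ρ`, every face of `Z_W` through `u` misses a vertex of
`ρ`, so the sum of the barycentric coordinates over `ρ` is positive on `C_u`.
-/

open Finset

theorem AffineMap.finset_sum_apply {k V P W ι : Type*} [Ring k] [AddCommGroup V] [Module k V]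
    [AddTorsor V P] [AddCommGroup W] [Module k W] (s : Finset ι) (f : ι → P →ᵃ[k] W) (x : P) :
    (∑ i ∈ s, f i) x = ∑ i ∈ s, f i x := by
  classical
  induction s using Finset.induction_on <;> simp [*, Finset.sum_insert]

section Nerve

variable {α E : Type*}

def nerve (C : α → Set E) : Set (Finset α) :=
  {σ | (⋂ v ∈ σ, C v).Nonempty}

theorem isRepresentable_iff {d : ℕ} {X : Set (Finset α)} :
    IsRepresentable d X ↔ ∃ C : α → Set (EuclideanSpace ℝ (Fin d)),
      (∀ v, IsCompact (C v) ∧ Convex ℝ (C v)) ∧ X = nerve C := by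
  simp only [IsRepresentable, Set.ext_iff, nerve, Set.mem_ofPred_eq]

theorem isRepresentable_nerve [NormedAddCommGroup E] [NormedSpace ℝ E] [FiniteDimensional ℝ E]
    {d : ℕ} (hE : Module.finrank ℝ E = d) (C : α → Set E)
    (hC : ∀ v, IsCompact (C v) ∧ Convex ℝ (C v)) : IsRepresentable d (nerve C) := by
  let e : EuclideanSpace ℝ (Fin d) ≃L[ℝ] E := .ofFinrankEq (by simp [hE])
  refine isRepresentable_iff.2 ⟨fun v => e ⁻¹' C v, fun v => ⟨?_, ?_⟩, ?_⟩
  · exact e.toHomeomorph.isCompact_preimage.2 (hC v).1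
  · exact (hC v).2.linear_preimage e.toLinearMap
  · ext σ
    simp only [nerve, Set.mem_ofPred_eq, ← Set.preimage_iInter₂, e.surjective.nonempty_preimage]

theorem nerve_univ_pi {ι : Type*} {E : ι → Type*} (C : ∀ i, α → Set (E i)) :
    nerve (fun v => Set.univ.pi fun i => C i v) = ⋂ i, nerve (C i) := by
  have hpi (σ : Finset α) :
      (⋂ v ∈ σ, Set.univ.pi fun i => C i v) = Set.univ.pi fun i => ⋂ v ∈ σ, C i v := by
    ext x
    simp only [Set.mem_iInter, Set.mem_pi, Set.mem_univ, true_implies]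
    exact ⟨fun h i v hv => h v hv i, fun h v hv i => h i v hv⟩
  ext σ
  simp only [nerve, Set.mem_ofPred_eq, Set.mem_iInter, hpi, Set.univ_pi_nonempty_iff]

theorem IsRepresentable.iInter {ι : Type*} [Fintype ι] {d : ι → ℕ} {Xs : ι → Set (Finset α)}
    (h : ∀ i, IsRepresentable (d i) (Xs i)) : IsRepresentable (∑ i, d i) (⋂ i, Xs i) := by
  choose C hC hXs using fun i => isRepresentable_iff.1 (h i)
  simp only [hXs, ← nerve_univ_pi]
  exact isRepresentable_nerve (by simp [Module.finrank_pi_fintype]) _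
    fun v => ⟨isCompact_univ_pi fun i => (hC i v).1, convex_pi fun i _ => (hC i v).2⟩

end Nerve

section Combinatorics

variable {α : Type*} {X : Set (Finset α)} {W σ τ : Finset α}

theorem exists_isMissingFace_subset (hσ : σ ∉ X) : ∃ τ ⊆ σ, IsMissingFace X τ := by
  induction σ using Finset.strongInduction with
  | H σ ih =>
    by_cases h : ∀ ρ ⊂ σ, ρ ∈ X
    · exact ⟨σ, subset_rfl, hσ, h⟩
    · obtain ⟨ρ, hρσ, hρ⟩ := not_forall₂.1 h
      obtain ⟨τ, hτρ, hτ⟩ := ih ρ hρσ hρ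
      exact ⟨τ, hτρ.trans hρσ.subset, hτ⟩

variable [DecidableEq α]

/-- The complex whose missing faces are the missing faces `τ` of `X` with `|τ \ W| ≤ 1`. -/
def dominatedComplex (X : Set (Finset α)) (W : Finset α) : Set (Finset α) :=
  {σ | ∀ τ, IsMissingFace X τ → #(τ \ W) ≤ 1 → ¬ τ ⊆ σ}

theorem eq_iInter_dominatedComplex {ι : Type*} {V : ι → Finset α} (hX : IsSimplicialComplex X)
    (hdom : ∀ τ, IsMissingFace X τ → ∃ i, #(τ \ V i) ≤ 1) :
    X = ⋂ i, dominatedComplex X (V i) := by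
  ext σ
  simp only [Set.mem_iInter, dominatedComplex, Set.mem_ofPred_eq]
  refine ⟨fun hσ i τ hτ _ hτσ => hτ.1 (hX σ hσ τ hτσ), fun h => ?_⟩
  by_contra hσ
  obtain ⟨τ, hτσ, hτ⟩ := exists_isMissingFace_subset hσ
  obtain ⟨i, hi⟩ := hdom τ hτ
  exact h i τ hτ hi hτσ

theorem not_subset_of_mem_dominatedComplex (hW : W ∉ X) (hσ : σ ∈ dominatedComplex X W) :
    ¬ W ⊆ σ := by
  obtain ⟨τ, hτW, hτ⟩ := exists_isMissingFace_subset hW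
  exact fun hWσ => hσ τ hτ (by simp [sdiff_eq_empty_iff_subset.2 hτW]) (hτW.trans hWσ)

theorem exists_mem_subset_insert_inter (hτ : τ.Nonempty) (h : #(τ \ W) ≤ 1) :
    ∃ u ∈ τ, τ ⊆ insert u (τ ∩ W) := by
  rcases (τ \ W).eq_empty_or_nonempty with hτW | ⟨u, hu⟩
  · obtain ⟨u, hu⟩ := hτ
    rw [inter_eq_left.2 (sdiff_eq_empty_iff_subset.1 hτW)]
    exact ⟨u, hu, subset_insert u τ⟩
  · refine ⟨u, (mem_sdiff.1 hu).1, fun v hv => ?_⟩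
    by_cases hvW : v ∈ W
    · exact mem_insert_of_mem (mem_inter.2 ⟨hv, hvW⟩)
    · rw [card_le_one.1 h v (mem_sdiff.2 ⟨hv, hvW⟩) u hu]
      exact mem_insert_self u _

theorem mem_dominatedComplex_of_forall (hempty : ∅ ∈ X)
    (h : ∀ u ∈ σ, ∀ ρ ⊆ σ, ρ ⊆ W → ∃ σ' ∈ dominatedComplex X W, u ∈ σ' ∧ ρ ⊆ σ') :
    σ ∈ dominatedComplex X W := by
  intro τ hτ hτW hτσ
  have hτne : τ.Nonempty := nonempty_iff_ne_empty.2 fun hτ0 => hτ.1 (hτ0 ▸ hempty)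
  obtain ⟨u, huτ, hτu⟩ := exists_mem_subset_insert_inter hτne hτW
  obtain ⟨σ', hσ', huσ', hτσ'⟩ :=
    h u (hτσ huτ) (τ ∩ W) (inter_subset_left.trans hτσ) inter_subset_right
  exact hσ' τ hτ hτW (hτu.trans (insert_subset huσ' hτσ'))

end Combinatorics

section Geometry

variable {α E : Type*} [DecidableEq α] [AddCommGroup E] [Module ℝ E] {W : Finset α}
  (b : AffineBasis W ℝ E) (K : Set (Finset α))

/-- The barycentre of the face of the simplex `b` spanned by the vertices of `W` outside `σ`:
its barycentric coordinates vanish exactly on `σ ∩ W`. -/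
noncomputable def facePoint (σ : Finset α) : E :=
  ({w : W | (w : α) ∉ σ} : Finset W).centroid ℝ b

theorem coord_facePoint {σ : Finset α} (hσ : ¬ W ⊆ σ) (w : W) :
    b.coord w (facePoint b σ) = if (w : α) ∈ σ then 0 else (#{w : W | (w : α) ∉ σ} : ℝ)⁻¹ := by
  have hne : ({w : W | (w : α) ∉ σ} : Finset W).Nonempty := by
    obtain ⟨v, hvW, hvσ⟩ := not_subset.1 hσ
    exact ⟨⟨v, hvW⟩, by simpa using hvσ⟩
  split_ifs with hw
  · exact b.coord_apply_combination_of_notMem (by simpa using hw)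
      (sum_centroidWeights_eq_one_of_nonempty ℝ _ hne)
  · exact b.coord_apply_centroid (by simpa using hw)

noncomputable def faceHull (u : α) : Set E :=
  convexHull ℝ (facePoint b '' {σ | σ ∈ K ∧ u ∈ σ})

variable {K}

theorem isCompact_faceHull [TopologicalSpace E] [IsTopologicalAddGroup E] [ContinuousSMul ℝ E]
    (u : α) : IsCompact (faceHull b K u) := by
  refine ((Set.finite_range fun s : Finset W => s.centroid ℝ b).subset ?_).isCompact_convexHull ℝ
  rintro _ ⟨σ, -, rfl⟩
  exact ⟨_, rfl⟩

theorem facePoint_mem_faceHull {σ : Finset α} {u : α} (hσ : σ ∈ K) (hu : u ∈ σ) :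
    facePoint b σ ∈ faceHull b K u :=
  subset_convexHull ℝ _ ⟨σ, ⟨hσ, hu⟩, rfl⟩

variable (hK : ∀ σ ∈ K, ¬ W ⊆ σ)
include hK

theorem coord_eq_zero_of_mem_faceHull {x : E} (w : W) (hx : x ∈ faceHull b K w) :
    b.coord w x = 0 := by
  refine convexHull_min ?_ ((convex_singleton 0).affine_preimage (b.coord w)) hx
  rintro _ ⟨σ, ⟨hσK, hwσ⟩, rfl⟩
  simp [coord_facePoint b (hK σ hσK), hwσ]

theorem sum_coord_pos_of_mem_faceHull {ρ : Finset α} {u : α} {x : E} (hρW : ρ ⊆ W)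
    (hρ : ∀ σ ∈ K, u ∈ σ → ¬ ρ ⊆ σ) (hx : x ∈ faceHull b K u) :
    0 < ∑ w ∈ ρ.subtype (· ∈ W), b.coord w x := by
  rw [← AffineMap.finset_sum_apply]
  refine convexHull_min ?_ ((convex_Ioi (0 : ℝ)).affine_preimage _) hx
  rintro _ ⟨σ, ⟨hσK, huσ⟩, rfl⟩
  obtain ⟨v, hvρ, hvσ⟩ := not_subset.1 (hρ σ hσK huσ)
  simp only [Set.mem_preimage, Set.mem_Ioi, AffineMap.finset_sum_apply,
    coord_facePoint b (hK σ hσK)]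
  refine sum_pos' (fun w _ => by positivity) ⟨⟨v, hρW hvρ⟩, by simpa using hvρ, ?_⟩
  rw [if_neg hvσ, inv_pos, Nat.cast_pos]
  exact card_pos.2 ⟨⟨v, hρW hvρ⟩, by simpa using hvσ⟩

theorem exists_mem_subset_of_mem_iInter_faceHull {σ ρ : Finset α} {u : α} {x : E}
    (hx : x ∈ ⋂ v ∈ σ, faceHull b K v) (hu : u ∈ σ) (hρσ : ρ ⊆ σ) (hρW : ρ ⊆ W) :
    ∃ σ' ∈ K, u ∈ σ' ∧ ρ ⊆ σ' := by
  by_contra! hρ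
  have hpos := sum_coord_pos_of_mem_faceHull b hK hρW hρ (Set.mem_iInter₂.1 hx u hu)
  rw [sum_eq_zero fun w hw => coord_eq_zero_of_mem_faceHull b hK w
    (Set.mem_iInter₂.1 hx _ (hρσ (mem_subtype.1 hw)))] at hpos
  exact hpos.false

end Geometry

theorem isRepresentable_dominatedComplex {α : Type*} [DecidableEq α] {X : Set (Finset α)}
    {W : Finset α} (hempty : ∅ ∈ X) (hW : W ∉ X) :
    IsRepresentable (#W - 1) (dominatedComplex X W) := by
  set Z := dominatedComplex X W
  have hZ : ∀ σ ∈ Z, ¬ W ⊆ σ := fun σ => not_subset_of_mem_dominatedComplex hW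
  have hWne : W.Nonempty := nonempty_iff_ne_empty.2 fun hW0 => hW (hW0 ▸ hempty)
  obtain ⟨b⟩ : Nonempty (AffineBasis W ℝ (EuclideanSpace ℝ (Fin (#W - 1)))) :=
    AffineBasis.exists_affineBasis_of_finiteDimensional <| by
      rw [Fintype.card_coe, finrank_euclideanSpace_fin, Nat.sub_add_cancel hWne.card_pos]
  have hZ_eq : Z = nerve (faceHull b Z) := by
    ext σ
    refine ⟨fun hσ => ⟨facePoint b σ, Set.mem_iInter₂.2 fun u hu => ?_⟩, fun ⟨x, hx⟩ => ?_⟩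
    · exact facePoint_mem_faceHull b hσ hu
    · exact mem_dominatedComplex_of_forall hempty fun u hu ρ hρσ hρW =>
        exists_mem_subset_of_mem_iInter_faceHull b hZ hx hu hρσ hρW
  rw [hZ_eq]
  exact isRepresentable_nerve finrank_euclideanSpace_fin _
    fun u => ⟨isCompact_faceHull b u, convex_convexHull ℝ _⟩

theorem representable_of_dominating_family_general {α : Type*} [DecidableEq α]
    (X : Set (Finset α)) (hX : IsSimplicialComplex X)
    (hempty : ∅ ∈ X)
    (k : ℕ) (V : Fin k → Finset α) (hV : ∀ i, V i ∉ X)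
    (hdom : ∀ τ : Finset α, IsMissingFace X τ → ∃ i, (τ \ V i).card ≤ 1) :
    (∃ Xs : Fin k → Set (Finset α),
        X = ⋂ i, Xs i ∧ ∀ i, IsRepresentable ((V i).card - 1) (Xs i)) ∧
      IsRepresentable (∑ i, ((V i).card - 1)) X := by
  have hX_eq : X = ⋂ i, dominatedComplex X (V i) := eq_iInter_dominatedComplex hX hdom
  have hrep i : IsRepresentable ((V i).card - 1) (dominatedComplex X (V i)) :=
    isRepresentable_dominatedComplex hempty (hV i)
  exact ⟨⟨_, hX_eq, hrep⟩, hX_eq ▸ IsRepresentable.iInter hrep⟩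

/-- If `V₁,…,V_k ∉ X` and every missing face `τ` of `X` satisfies
`|τ \ Vᵢ| ≤ 1` for some `i`, then `X` is the intersection of complexes `Xᵢ`, each
`(|Vᵢ|−1)`-representable; in particular `X` is `(∑ᵢ (|Vᵢ|−1))`-representable. -/
theorem representable_of_dominating_family {α : Type*} [Fintype α] [DecidableEq α]
    (X : Set (Finset α)) (hX : IsSimplicialComplex X)
    (hempty : ∅ ∈ X) (hsing : ∀ v : α, {v} ∈ X)
    (k : ℕ) (V : Fin k → Finset α) (hV : ∀ i, V i ∉ X)
    (hdom : ∀ τ : Finset α, IsMissingFace X τ → ∃ i, (τ \ V i).card ≤ 1) :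
    (∃ Xs : Fin k → Set (Finset α),
        X = ⋂ i, Xs i ∧ ∀ i, IsRepresentable ((V i).card - 1) (Xs i)) ∧
      IsRepresentable (∑ i, ((V i).card - 1)) X :=
  representable_of_dominating_family_general X hX hempty k V hV hdom
end

section
/- Let M be a partial Steiner (d, d+1, n)-system on V, and let τ₁, τ₂ ∈ M be distinct with |τ₁ ∩ τ₂| = k maximal among pairs of distinct members. Let τ ∈ M, τ ∉ {τ₁, τ₂}, with τ ⊆ τ₁ ∪ τ₂. Then τ \ (τ₁ ∩ τ₂) = (τ₁ ∪ τ₂) \ (τ₁ ∩ τ₂); in particular τ ∪ τ₁ = τ₁ ∪ τ₂ and τ ∪ τ₂ = τ₁ ∪ τ₂. -/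
/-!
Since `τ ⊆ τ₁ ∪ τ₂`, we have `τ \ τ₁ ⊆ τ₂ \ τ₁`. All members of `M` have `d + 1` elements, and
maximality of `|τ₁ ∩ τ₂|` gives `|τ ∩ τ₁| ≤ |τ₂ ∩ τ₁|`, so `τ \ τ₁` is at least as large as
`τ₂ \ τ₁` and the two coincide. Symmetrically `τ \ τ₂ = τ₁ \ τ₂`, and the three identities follow
by Boolean algebra.
-/

namespace Finset

variable {α : Type*} [DecidableEq α] {s t u : Finset α}

theorem sdiff_eq_sdiff_of_subset_union (hsub : s ⊆ t ∪ u) (hcard : #u ≤ #s)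
    (hinter : #(s ∩ t) ≤ #(u ∩ t)) : s \ t = u \ t := by
  have hsdiff : s \ t ⊆ u \ t := fun x hx => by
    have := hsub (mem_sdiff.1 hx).1
    grind
  refine eq_of_subset_of_card_le hsdiff ?_
  have hs := card_inter_add_card_sdiff s t
  have hu := card_inter_add_card_sdiff u t
  omega

theorem union_eq_union_of_sdiff_eq (h : s \ t = u \ t) : s ∪ t = u ∪ t := by
  rw [← sdiff_union_self_eq_union, h, sdiff_union_self_eq_union]

theorem sdiff_inter_eq_of_sdiff_eq_sdiff (h₁ : s \ t = u \ t) (h₂ : s \ u = t \ u) :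
    s \ (t ∩ u) = (t ∪ u) \ (t ∩ u) := by
  rw [sdiff_inter_distrib_right, h₁, h₂, ← Finset.symmDiff_def, symmDiff_comm,
    symmDiff_eq_sup_sdiff_inf]
  rfl

end Finset

open Finset

theorem partialSteiner_max_inter_general {α : Type*} [DecidableEq α]
    (d : ℕ)
    (M : Finset (Finset α))
    (hMcard : ∀ σ ∈ M, σ.card = d + 1)
    (τ₁ τ₂ : Finset α) (hτ₁ : τ₁ ∈ M) (hτ₂ : τ₂ ∈ M)
    (hmax : ∀ σ ∈ M, ∀ σ' ∈ M, σ ≠ σ' → (σ ∩ σ').card ≤ (τ₁ ∩ τ₂).card)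
    (τ : Finset α) (hτ : τ ∈ M) (hττ₁ : τ ≠ τ₁) (hττ₂ : τ ≠ τ₂)
    (hsub : τ ⊆ τ₁ ∪ τ₂) :
    τ \ (τ₁ ∩ τ₂) = (τ₁ ∪ τ₂) \ (τ₁ ∩ τ₂) ∧
      τ ∪ τ₁ = τ₁ ∪ τ₂ ∧ τ ∪ τ₂ = τ₁ ∪ τ₂ := by
  have h₁ : τ \ τ₁ = τ₂ \ τ₁ :=
    sdiff_eq_sdiff_of_subset_union hsub (by rw [hMcard τ hτ, hMcard τ₂ hτ₂])
      (by rw [inter_comm τ₂]; exact hmax τ hτ τ₁ hτ₁ hττ₁)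
  have h₂ : τ \ τ₂ = τ₁ \ τ₂ :=
    sdiff_eq_sdiff_of_subset_union (union_comm τ₁ τ₂ ▸ hsub)
      (by rw [hMcard τ hτ, hMcard τ₁ hτ₁]) (hmax τ hτ τ₂ hτ₂ hττ₂)
  refine ⟨sdiff_inter_eq_of_sdiff_eq_sdiff h₁ h₂, ?_, union_eq_union_of_sdiff_eq h₂⟩
  rw [union_eq_union_of_sdiff_eq h₁, union_comm]

/-- In a partial Steiner (d,d+1,n)-system `M`, if `τ₁ ≠ τ₂` have intersection
of maximal size among pairs of distinct members, and `τ ∈ M`, `τ ∉ {τ₁, τ₂}`,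
`τ ⊆ τ₁ ∪ τ₂`, then `τ \ (τ₁ ∩ τ₂) = (τ₁ ∪ τ₂) \ (τ₁ ∩ τ₂)`; in particular
`τ ∪ τ₁ = τ₁ ∪ τ₂` and `τ ∪ τ₂ = τ₁ ∪ τ₂`. -/
theorem partialSteiner_max_inter {α : Type*} [Fintype α] [DecidableEq α]
    (n d : ℕ) (hd : 1 ≤ d) (hn : Fintype.card α = n)
    (M : Finset (Finset α))
    (hMcard : ∀ σ ∈ M, σ.card = d + 1)
    (hMpartial : ∀ η : Finset α, η.card = d → (M.filter fun σ => η ⊆ σ).card ≤ 1)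
    (τ₁ τ₂ : Finset α) (hτ₁ : τ₁ ∈ M) (hτ₂ : τ₂ ∈ M) (hne : τ₁ ≠ τ₂)
    (hmax : ∀ σ ∈ M, ∀ σ' ∈ M, σ ≠ σ' → (σ ∩ σ').card ≤ (τ₁ ∩ τ₂).card)
    (τ : Finset α) (hτ : τ ∈ M) (hττ₁ : τ ≠ τ₁) (hττ₂ : τ ≠ τ₂)
    (hsub : τ ⊆ τ₁ ∪ τ₂) :
    τ \ (τ₁ ∩ τ₂) = (τ₁ ∪ τ₂) \ (τ₁ ∩ τ₂) ∧
      τ ∪ τ₁ = τ₁ ∪ τ₂ ∧ τ ∪ τ₂ = τ₁ ∪ τ₂ :=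
  partialSteiner_max_inter_general d M hMcard τ₁ τ₂ hτ₁ hτ₂ hmax τ hτ hττ₁ hττ₂ hsub
end

section
/- Let X be a simplicial complex on vertex set V of size n ≥ d+2 with h(X) = d, whose family of (d+1)-element non-faces contains a Steiner (d, d+1, n)-system A that equals the set of all (d+1)-subsets of V not in X. Then X has no missing face of size at most d; consequently the set of missing faces of X is exactly A. -/
/-!
A non-face `τ` with at most `d` vertices lies in some `d`-set `η`, and every one-point extension
of `η` is a `(d+1)`-element non-face containing `η`. Since at least two vertices lie outside `η`,
`η` is covered by two distinct blocks of the Steiner system, which is impossible. Hence all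
non-faces have more than `d` vertices, so the missing faces are exactly the `(d+1)`-element
non-faces.
-/

open Finset

namespace IsSimplicialComplex

variable {α : Type*} {X : Set (Finset α)}

theorem notMem_of_subset (hX : IsSimplicialComplex X) {σ τ : Finset α} (hστ : σ ⊆ τ)
    (hσ : σ ∉ X) : τ ∉ X :=
  fun hτ => hσ (hX τ hτ σ hστ)

theorem lt_card_of_notMem [Fintype α] [DecidableEq α] (hX : IsSimplicialComplex X) {d : ℕ}
    (hd : d + 2 ≤ Fintype.card α)
    (hsteiner : ∀ η : Finset α, η.card = d →
      ∃! σ : Finset α, (σ.card = d + 1 ∧ σ ∉ X) ∧ η ⊆ σ)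
    {τ : Finset α} (hτ : τ ∉ X) : d < τ.card := by
  by_contra! hτd
  obtain ⟨η, hτη, hη⟩ := exists_superset_card_eq hτd (by omega : d ≤ Fintype.card α)
  have hext : ∀ c ∉ η, ((insert c η).card = d + 1 ∧ insert c η ∉ X) ∧ η ⊆ insert c η :=
    fun c hc => ⟨⟨by rw [card_insert_of_notMem hc, hη],
      hX.notMem_of_subset (hτη.trans (subset_insert c η)) hτ⟩, subset_insert c η⟩
  have hcompl : 1 < ηᶜ.card := by
    rw [card_compl]
    omega
  obtain ⟨a, ha, b, hb, hab⟩ := one_lt_card.mp hcompl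
  rw [mem_compl] at ha hb
  exact hab ((insert_inj ha).mp ((hsteiner η hη).unique (hext a ha) (hext b hb)))

end IsSimplicialComplex

theorem missingFaces_eq_steiner_general {α : Type*} [Fintype α] [DecidableEq α]
    (n d : ℕ) (hn : Fintype.card α = n) (hnd : d + 2 ≤ n)
    (X : Set (Finset α)) (hX : IsSimplicialComplex X)
    (hhle : ∀ τ : Finset α, IsMissingFace X τ → τ.card ≤ d + 1)
    (hsteiner : ∀ η : Finset α, η.card = d →
      ∃! σ : Finset α, (σ.card = d + 1 ∧ σ ∉ X) ∧ η ⊆ σ) :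
    (∀ τ : Finset α, IsMissingFace X τ → ¬ τ.card ≤ d) ∧
      (∀ τ : Finset α, IsMissingFace X τ ↔ (τ.card = d + 1 ∧ τ ∉ X)) := by
  have hlarge : ∀ τ ∉ X, d < τ.card := fun τ =>
    hX.lt_card_of_notMem (hn ▸ hnd) hsteiner
  refine ⟨fun τ hτ => not_le.mpr (hlarge τ hτ.1), fun τ => ⟨fun hτ => ?_, fun hτ => ?_⟩⟩
  · exact ⟨le_antisymm (hhle τ hτ) (hlarge τ hτ.1), hτ.1⟩
  · refine ⟨hτ.2, fun σ hστ => ?_⟩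
    by_contra hσ
    have := card_lt_card hστ
    have := hlarge σ hσ
    omega

/-- Let `X` be a complex on `n ≥ d+2` vertices with `h(X) = d`, such that the
family of all `(d+1)`-element non-faces of `X` is a Steiner (d,d+1,n)-system. Then `X` has no
missing face of size at most `d`, and consequently the missing faces of `X` are exactly the
`(d+1)`-element non-faces. -/
theorem missingFaces_eq_steiner {α : Type*} [Fintype α] [DecidableEq α]
    (n d : ℕ) (hn : Fintype.card α = n) (hnd : d + 2 ≤ n)
    (X : Set (Finset α)) (hX : IsSimplicialComplex X)
    (hempty : ∅ ∈ X) (hsing : ∀ v : α, {v} ∈ X)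
    (hhle : ∀ τ : Finset α, IsMissingFace X τ → τ.card ≤ d + 1)
    (hheq : ∃ τ : Finset α, IsMissingFace X τ ∧ τ.card = d + 1)
    (hsteiner : ∀ η : Finset α, η.card = d →
      ∃! σ : Finset α, (σ.card = d + 1 ∧ σ ∉ X) ∧ η ⊆ σ) :
    (∀ τ : Finset α, IsMissingFace X τ → ¬ τ.card ≤ d) ∧
      (∀ τ : Finset α, IsMissingFace X τ ↔ (τ.card = d + 1 ∧ τ ∉ X)) :=
  missingFaces_eq_steiner_general n d hn hnd X hX hhle hsteiner
end
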